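/- In any inner product space X, any two maximal orthonormal systems have the same cardinality. -/

import Mathlib

/-!
If `B` is finite, `span B` is finite-dimensional, hence complete, so maximality forces
`span B = E`: then `B` is a Hamel basis, every orthonormal set is finite, and both cardinalities
equal the dimension of `E`. If `C` is infinite, maximality gives `(span C)ᗮ = ⊥` (no completeness
needed), so every `b ∈ B` pairs nontrivially with some `c ∈ C`, while by Bessel's inequality each
`c` pairs nontrivially with only countably many `b`; hence `#B ≤ #C · ℵ₀ = #C`.
-/

noncomputable section
open scoped InnerProductSpace ENNReal

/-- An orthonormal subset of an inner product space. -/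
def OrthSet (k : Type*) {E : Type*} [RCLike k] [NormedAddCommGroup E]
    [InnerProductSpace k E] (B : Set E) : Prop :=
  Orthonormal k ((↑) : B → E)

/-- A maximal orthonormal system of the whole space. -/
def MaximalOrthSet (k : Type*) {E : Type*} [RCLike k] [NormedAddCommGroup E]
    [InnerProductSpace k E] (B : Set E) : Prop :=
  OrthSet k B ∧ ∀ C : Set E, B ⊆ C → OrthSet k C → C = B

/-- An orthonormal basis (as a set): an orthonormal system whose linear span is dense. -/
def IsOrthBasisSet (k : Type*) {E : Type*} [RCLike k] [NormedAddCommGroup E]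
    [InnerProductSpace k E] (B : Set E) : Prop :=
  OrthSet k B ∧ Dense (Submodule.span k B : Set E)

/-- The space has an orthonormal basis (is non-pathological). -/
def HasOrthBasis (k E : Type*) [RCLike k] [NormedAddCommGroup E]
    [InnerProductSpace k E] : Prop :=
  ∃ B : Set E, IsOrthBasisSet k B

/-- Density: least cardinality of a dense subset. -/
def densityCard (E : Type*) [TopologicalSpace E] : Cardinal :=
  sInf { c | ∃ D : Set E, Dense D ∧ Cardinal.mk D = c }

section

open Cardinal Submodule

variable {k : Type*} [RCLike k] {E : Type*} [NormedAddCommGroup E] [InnerProductSpace k E]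

theorem exists_mem_inner_ne_zero_of_orthogonal_span_eq_bot {C : Set E}
    (hC : (span k C)ᗮ = ⊥) {x : E} (hx : x ≠ 0) : ∃ c ∈ C, ⟪x, c⟫_k ≠ 0 := by
  by_contra! h
  have hxC : span k {x} ≤ (span k C)ᗮ :=
    isOrtho_iff_le.mp (isOrtho_span.mpr fun u hu c hc => (Set.mem_singleton_iff.mp hu) ▸ h c hc)
  have : x ∈ (span k C)ᗮ := hxC (mem_span_singleton_self x)
  rw [hC, mem_bot] at this
  exact hx this

theorem OrthSet.mk_le_mk_mul_aleph0 {B C : Set E} (hB : OrthSet k B)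
    (hC : (span k C)ᗮ = ⊥) : #B ≤ #C * ℵ₀ := by
  have hpair (b : B) : ∃ c : C, ⟪(b : E), (c : E)⟫_k ≠ 0 := by
    obtain ⟨c, hc, hbc⟩ := exists_mem_inner_ne_zero_of_orthogonal_span_eq_bot hC (hB.ne_zero b)
    exact ⟨⟨c, hc⟩, hbc⟩
  choose f hf using hpair
  refine mk_le_mk_mul_of_mk_preimage_le f fun c => ?_
  refine Set.Countable.le_aleph0 <|
    (hB.inner_products_summable (x := (c : E))).countable_support.mono fun b hb => ?_
  rw [Set.mem_preimage, Set.mem_singleton_iff] at hb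
  simpa [← hb] using hf b

namespace MaximalOrthSet

theorem orthogonal_span_eq_bot {B : Set E} (hB : MaximalOrthSet k B) : (span k B)ᗮ = ⊥ :=
  (maximal_orthonormal_iff_orthogonalComplement_eq_bot hB.1).mp hB.2

theorem span_eq_top_of_finite {B : Set E} (hB : MaximalOrthSet k B) (hBf : B.Finite) :
    span k B = ⊤ :=
  have : FiniteDimensional k (span k B) := FiniteDimensional.span_of_finite k hBf
  orthogonal_eq_bot_iff.mp hB.orthogonal_span_eq_bot

theorem mk_eq_rank_of_finite {B : Set E} (hB : MaximalOrthSet k B) (hBf : B.Finite) :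
    #B = Module.rank k E :=
  (Module.Basis.mk hB.1.linearIndependent
    (by rw [Subtype.range_coe, hB.span_eq_top_of_finite hBf])).mk_eq_rank''

theorem finite_of_orthSet {B C : Set E} (hB : MaximalOrthSet k B) (hBf : B.Finite)
    (hC : OrthSet k C) : C.Finite :=
  have : Module.Finite k E :=
    ⟨⟨hBf.toFinset, by rw [hBf.coe_toFinset, hB.span_eq_top_of_finite hBf]⟩⟩
  hC.linearIndependent.setFinite

end MaximalOrthSet

theorem OrthSet.mk_le_of_infinite {B C : Set E} (hB : OrthSet k B) (hC : MaximalOrthSet k C)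
    (hCinf : C.Infinite) : #B ≤ #C :=
  (hB.mk_le_mk_mul_aleph0 hC.orthogonal_span_eq_bot).trans_eq
    (mul_aleph0_eq (infinite_iff.mp hCinf.to_subtype))

end

theorem stmt2 {k : Type*} [RCLike k] {E : Type*} [NormedAddCommGroup E]
    [InnerProductSpace k E] (B C : Set E)
    (hB : MaximalOrthSet k B) (hC : MaximalOrthSet k C) :
    Cardinal.mk B = Cardinal.mk C := by
  by_cases hBf : B.Finite
  · rw [hB.mk_eq_rank_of_finite hBf, hC.mk_eq_rank_of_finite (hB.finite_of_orthSet hBf hC.1)]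
  · have hCinf : C.Infinite := fun hCf => hBf (hC.finite_of_orthSet hCf hB.1)
    exact le_antisymm (hB.1.mk_le_of_infinite hC hCinf) (hC.1.mk_le_of_infinite hB hBf)
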